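/- arXiv:2510.19452 — 2 statements merged into one kernel-verified Lean document; each statement's English description precedes it below -/
import Mathlib

section
/- If G is a finite connected simple graph with n(G) ≥ 2, then vv(G) = n(G) − 2 if and only if G contains no universal vertex and G contains a spanning double star. -/
open SimpleGraph

variable {V : Type*}

/-- A walk `p` is a shortest path between its endpoints. -/
def SimpleGraph.IsShortestPath (G : SimpleGraph V) {x y : V} (p : G.Walk x y) : Prop :=
  p.IsPath ∧ p.length = G.dist x y

/-- `S` is an `x`-visibility set: `x ∉ S` and for every `y ∈ S` there is a shortest
`x,y`-path meeting `S` only in `y`. -/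
def SimpleGraph.IsXVisSet (G : SimpleGraph V) (x : V) (S : Finset V) : Prop :=
  x ∉ S ∧ ∀ y ∈ S, ∃ p : G.Walk x y, G.IsShortestPath p ∧
    ∀ z ∈ p.support, z ∈ S → z = y

/-- The `x`-visibility number `v_x(G)`: the maximum cardinality of an `x`-visibility set. -/
noncomputable def SimpleGraph.vx (G : SimpleGraph V) (x : V) : ℕ :=
  sSup {n | ∃ S : Finset V, G.IsXVisSet x S ∧ S.card = n}

/-- The vertex visibility number `vv(G)`: the maximum of `v_x(G)` over all vertices. -/
noncomputable def SimpleGraph.vv (G : SimpleGraph V) [Fintype V] : ℕ :=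
  Finset.univ.sup fun x => G.vx x

/-!
An `x`-visibility set `S` avoids `x`, and a shortest path from `x` to `y ∈ S` that meets `S`
only in `y` runs through vertices outside `S`. So `|S| = n - 1` forces `x` to be adjacent to
every vertex, and `|S| = n - 2`, with `w` the one other vertex outside `S`, forces every
`y ∈ S` to be adjacent to `x` or to `w` with `x ~ w`. Either way `G` has a dominating edge
(an edge `uv` with every vertex adjacent to `u` or `v`): `xw`, or else `xz` for any neighbour `z`
of `w`. Conversely a dominating edge `uv` makes `V \ {u, v}` a `u`-visibility set. Hence
`vv = n - 1` iff there is a universal vertex, and `vv ≥ n - 2` iff there is a dominating edge.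
Without universal vertices, a dominating edge `uv` is the same as a spanning double star with
centres `u` and `v`: hang every other vertex on `u` if possible and on `v` otherwise.
-/

lemma Finset.exists_forall_notMem_eq_or_eq {α : Type*} [Fintype α] [DecidableEq α] {x : α}
    {S : Finset α} (hx : x ∉ S) (hcard : Fintype.card α ≤ S.card + 2) :
    ∃ w, ∀ z ∉ S, z = x ∨ z = w := by
  have hrest : (Finset.univ \ insert x S).card ≤ 1 := by
    rw [Finset.card_sdiff_of_subset (Finset.subset_univ _), Finset.card_univ,
      Finset.card_insert_of_notMem hx]
    omega
  have : Nonempty α := ⟨x⟩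
  obtain ⟨w, hw⟩ := Finset.card_le_one_iff_subset_singleton.1 hrest
  refine ⟨w, fun z hz => or_iff_not_imp_left.2 fun hzx => ?_⟩
  simpa using hw (by simp [hz, hzx] : z ∈ Finset.univ \ insert x S)

namespace SimpleGraph

variable {G : SimpleGraph V}

lemma Walk.IsPath.length_lt_card_of_support_subset {x y : V} {p : G.Walk x y} (hp : p.IsPath)
    {s : Finset V} (hs : ∀ z ∈ p.support, z ∈ s) : p.length < s.card := by
  classical
  calc p.length < p.support.length := by simp
    _ = p.support.toFinset.card := (List.toFinset_card_of_nodup hp.support_nodup).symm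
    _ ≤ s.card := Finset.card_le_card fun z hz => hs z (List.mem_toFinset.1 hz)

lemma isShortestPath_toWalk {x y : V} (h : G.Adj x y) : G.IsShortestPath h.toWalk :=
  ⟨h.isPath_toWalk, by simp [dist_eq_one_iff_adj.2 h]⟩

lemma isShortestPath_cons_toWalk {x w y : V} (hxw : G.Adj x w) (hwy : G.Adj w y)
    (hxy : x ≠ y) (hnxy : ¬ G.Adj x y) : G.IsShortestPath (Walk.cons hxw hwy.toWalk) := by
  refine ⟨?_, ?_⟩
  · simp [Walk.isPath_def, hxw.ne, hwy.ne, hxy]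
  · have hpos := (hxw.reachable.trans hwy.reachable).pos_dist_of_ne hxy
    have hle := dist_le (Walk.cons hxw hwy.toWalk)
    have hne : G.dist x y ≠ 1 := fun h => hnxy (dist_eq_one_iff_adj.1 h)
    simp only [Walk.length_cons, Walk.length_nil] at hle ⊢
    omega

lemma IsXVisSet.adj_or_adj_adj [DecidableEq V] {x w : V} {S : Finset V} (hS : G.IsXVisSet x S)
    (hw : ∀ z ∉ S, z = x ∨ z = w) {y : V} (hy : y ∈ S) :
    G.Adj x y ∨ (G.Adj x w ∧ G.Adj w y) := by
  obtain ⟨p, ⟨hp, -⟩, hpS⟩ := hS.2 y hy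
  have hsupp : ∀ z ∈ p.support, z ∈ ({x, w, y} : Finset V) := by
    intro z hz
    by_cases hzS : z ∈ S
    · simp [hpS z hz hzS]
    · rcases hw z hzS with rfl | rfl <;> simp
  have hlen := hp.length_lt_card_of_support_subset hsupp
  have hxy : x ≠ y := fun h => hS.1 (h ▸ hy)
  have hlen0 : p.length ≠ 0 := fun h => hxy (Walk.eq_of_length_eq_zero h)
  have hlt : p.length < 3 := hlen.trans_le Finset.card_le_three
  obtain hl | hl : p.length = 1 ∨ p.length = 2 := by omega
  · exact Or.inl (Walk.adj_of_length_eq_one hl)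
  · have h0 : G.Adj x (p.getVert 1) := by
      simpa using p.adj_getVert_succ (i := 0) (by omega)
    have h1 : G.Adj (p.getVert 1) y := by
      simpa [← hl] using p.adj_getVert_succ (i := 1) (by omega)
    have hm := hsupp _ (p.getVert_mem_support 1)
    simp only [Finset.mem_insert, Finset.mem_singleton] at hm
    rcases hm with hm | hm | hm
    · exact absurd (hm ▸ h0) (G.loopless.irrefl _)
    · exact Or.inr (hm ▸ ⟨h0, h1⟩)
    · exact absurd (hm ▸ h1) (G.loopless.irrefl _)

def IsDominatingEdge (G : SimpleGraph V) (u v : V) : Prop :=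
  G.Adj u v ∧ ∀ w, w ≠ u → w ≠ v → G.Adj u w ∨ G.Adj v w

lemma isXVisSet_of_forall_adj {x : V} {S : Finset V} (hx : x ∉ S) (h : ∀ y ∈ S, G.Adj x y) :
    G.IsXVisSet x S := by
  refine ⟨hx, fun y hy => ⟨(h y hy).toWalk, isShortestPath_toWalk (h y hy), ?_⟩⟩
  rintro z hz hzS
  simp only [Adj.toWalk, Walk.support_cons, Walk.support_nil, List.mem_cons,
    List.not_mem_nil, or_false] at hz
  rcases hz with rfl | rfl
  exacts [absurd hzS hx, rfl]

section VisibilityNumber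

variable [Fintype V]

lemma bddAbove_setOf_isXVisSet_card (x : V) :
    BddAbove {n | ∃ S : Finset V, G.IsXVisSet x S ∧ S.card = n} :=
  ⟨Fintype.card V, by rintro _ ⟨S, -, rfl⟩; exact S.card_le_univ⟩

lemma IsXVisSet.card_le_vv {x : V} {S : Finset V} (hS : G.IsXVisSet x S) : S.card ≤ G.vv :=
  (le_csSup (bddAbove_setOf_isXVisSet_card x) ⟨S, hS, rfl⟩).trans
    (Finset.le_sup (f := G.vx) (Finset.mem_univ x))

lemma exists_isXVisSet_card_eq_vv [Nonempty V] :
    ∃ x, ∃ S : Finset V, G.IsXVisSet x S ∧ S.card = G.vv := by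
  obtain ⟨x, -, hx⟩ := Finset.exists_mem_eq_sup Finset.univ Finset.univ_nonempty G.vx
  have hne : {n | ∃ S : Finset V, G.IsXVisSet x S ∧ S.card = n}.Nonempty :=
    ⟨0, ∅, isXVisSet_of_forall_adj (Finset.notMem_empty x) (by simp), rfl⟩
  obtain ⟨S, hS, hcard⟩ := Nat.sSup_mem hne (bddAbove_setOf_isXVisSet_card x)
  exact ⟨x, S, hS, hcard.trans hx.symm⟩

lemma IsUniversal.card_sub_one_le_vv [DecidableEq V] {x : V} (h : G.IsUniversal x) :
    Fintype.card V - 1 ≤ G.vv := by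
  have hS : G.IsXVisSet x (Finset.univ.erase x) :=
    isXVisSet_of_forall_adj (by simp) fun y hy => h (Finset.ne_of_mem_erase hy).symm
  simpa [Finset.card_erase_of_mem] using hS.card_le_vv

lemma exists_isUniversal_of_card_sub_one_le_vv [Nonempty V] (h : Fintype.card V - 1 ≤ G.vv) :
    ∃ x, G.IsUniversal x := by
  classical
  obtain ⟨x, S, hS, hcard⟩ := G.exists_isXVisSet_card_eq_vv
  have hSx : S = Finset.univ.erase x := by
    refine Finset.eq_of_subset_of_card_le (fun y hy => ?_) ?_
    · exact Finset.mem_erase.2 ⟨fun hyx => hS.1 (hyx ▸ hy), Finset.mem_univ y⟩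
    · simpa [Finset.card_erase_of_mem, hcard] using h
  -- `S` misses no vertex but `x`, so `adj_or_adj_adj` applies with `w := x`
  have hw : ∀ z ∉ S, z = x ∨ z = x := fun z hz => by simp_all
  refine ⟨x, fun y hxy => ?_⟩
  have hy : y ∈ S := by simp [hSx, Ne.symm hxy]
  simpa using hS.adj_or_adj_adj hw hy

lemma IsDominatingEdge.isXVisSet [DecidableEq V] {u v : V}
    (h : G.IsDominatingEdge u v) : G.IsXVisSet u (Finset.univ \ {u, v}) := by
  refine ⟨by simp, fun y hy => ?_⟩
  simp only [Finset.mem_sdiff, Finset.mem_univ, Finset.mem_insert, Finset.mem_singleton,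
    true_and, not_or] at hy
  by_cases huy : G.Adj u y
  · refine ⟨huy.toWalk, isShortestPath_toWalk huy, fun z hz hzS => ?_⟩
    simp only [Adj.toWalk, Walk.support_cons, Walk.support_nil, List.mem_cons,
      List.not_mem_nil, or_false] at hz
    rcases hz with rfl | rfl
    exacts [absurd hzS (by simp), rfl]
  · have hvy := (h.2 y hy.1 hy.2).resolve_left huy
    refine ⟨Walk.cons h.1 hvy.toWalk,
      isShortestPath_cons_toWalk h.1 hvy (Ne.symm hy.1) huy, fun z hz hzS => ?_⟩
    simp only [Adj.toWalk, Walk.support_cons, Walk.support_nil, List.mem_cons,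
      List.not_mem_nil, or_false] at hz
    rcases hz with rfl | rfl | rfl
    exacts [absurd hzS (by simp), absurd hzS (by simp), rfl]

lemma IsDominatingEdge.card_sub_two_le_vv {u v : V} (h : G.IsDominatingEdge u v) :
    Fintype.card V - 2 ≤ G.vv := by
  classical
  have := h.isXVisSet.card_le_vv
  rwa [Finset.card_sdiff_of_subset (Finset.subset_univ _), Finset.card_univ,
    Finset.card_pair h.1.ne] at this

lemma exists_isDominatingEdge_of_card_sub_two_le_vv [Nontrivial V] (hG : G.Connected)
    (h : Fintype.card V - 2 ≤ G.vv) : ∃ u v, G.IsDominatingEdge u v := by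
  classical
  obtain ⟨x, S, hS, hcard⟩ := G.exists_isXVisSet_card_eq_vv
  obtain ⟨w, hw⟩ := Finset.exists_forall_notMem_eq_or_eq hS.1 (by omega)
  have hmem : ∀ z, z ≠ x → z ≠ w → z ∈ S := fun z hzx hzw => by
    by_contra hz
    exact (hw z hz).elim hzx hzw
  by_cases hxw : G.Adj x w
  · exact ⟨x, w, hxw, fun z hzx hzw => (hS.adj_or_adj_adj hw (hmem z hzx hzw)).imp_right And.right⟩
  -- `x` sees all of `S` directly, so `x` together with any neighbour of `w` dominates.
  have hxS : ∀ y ∈ S, G.Adj x y := fun y hy =>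
    (hS.adj_or_adj_adj hw hy).resolve_right fun h => hxw h.1
  obtain ⟨z, hwz⟩ := hG.preconnected.exists_adj_of_nontrivial w
  have hzS : z ∈ S := hmem z (by rintro rfl; exact hxw hwz.symm) hwz.ne.symm
  refine ⟨x, z, hxS z hzS, fun y hyx hyz => ?_⟩
  by_cases hyw : y = w
  · exact Or.inr (hyw ▸ hwz.symm)
  · exact Or.inl (hxS y (hmem y hyx hyw))

end VisibilityNumber

def parentGraph (r : V) (p : V → V) : SimpleGraph V :=
  fromRel fun u v => u ≠ r ∧ v = p u

section ParentGraph

variable {r : V} {p : V → V}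

lemma parentGraph_adj {u v : V} :
    (parentGraph r p).Adj u v ↔ u ≠ v ∧ ((u ≠ r ∧ v = p u) ∨ (v ≠ r ∧ u = p v)) :=
  fromRel_adj _ u v

lemma parentGraph_le {G : SimpleGraph V} (h : ∀ v, v ≠ r → G.Adj v (p v)) :
    parentGraph r p ≤ G := by
  intro a b hab
  rcases (parentGraph_adj.1 hab).2 with ⟨ha, rfl⟩ | ⟨hb, rfl⟩
  exacts [h a ha, (h b hb).symm]

lemma neighborSet_parentGraph {v : V} (hv : v ≠ r) (hpv : p v ≠ v) (hleaf : ∀ w, p w ≠ v) :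
    (parentGraph r p).neighborSet v = {p v} := by
  ext w
  simp only [mem_neighborSet, parentGraph_adj, Set.mem_singleton_iff]
  grind

lemma isTree_parentGraph [Finite V] (d : V → ℕ) (hd : ∀ v, v ≠ r → d (p v) < d v) :
    (parentGraph r p).IsTree := by
  have hp : ∀ v, v ≠ r → v ≠ p v := fun v hv h => (hd v hv).ne (congrArg d h.symm)
  have hreach : ∀ v, (parentGraph r p).Reachable v r := by
    intro v
    induction hdv : d v using Nat.strong_induction_on generalizing v with
    | _ n ih =>
      by_cases hv : v = r
      · exact hv ▸ Reachable.refl v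
      · have hadj : (parentGraph r p).Adj v (p v) :=
          parentGraph_adj.2 ⟨hp v hv, Or.inl ⟨hv, rfl⟩⟩
        exact hadj.reachable.trans (ih _ (hdv ▸ hd v hv) _ rfl)
  have hconn : (parentGraph r p).Connected :=
    (connected_iff _).2 ⟨fun u v => (hreach u).trans (hreach v).symm, ⟨r⟩⟩
  have hedges : (parentGraph r p).edgeSet = (fun v => s(v, p v)) '' {r}ᶜ := by
    ext e
    induction e using Sym2.ind with
    | _ a b =>
      simp only [mem_edgeSet, parentGraph_adj, Set.mem_image, Set.mem_compl_iff,
        Set.mem_singleton_iff, Sym2.eq_iff]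
      grind
  have hinj : Set.InjOn (fun v => s(v, p v)) {r}ᶜ := by
    intro a ha b hb hab
    rcases Sym2.eq_iff.1 hab with ⟨h, -⟩ | ⟨h₁, h₂⟩
    · exact h
    · have hab := hd a ha
      have hba := hd b hb
      rw [h₂] at hab
      rw [← h₁] at hba
      omega
  refine isTree_iff_connected_and_card.2 ⟨hconn, ?_⟩
  rw [Nat.card_coe_set_eq, hedges, hinj.ncard_image, ← Set.ncard_singleton r]
  exact Set.ncard_compl_add_ncard _

end ParentGraph

def IsDoubleStar (T : SimpleGraph V) : Prop :=
  T.IsTree ∧ {v | (T.neighborSet v).ncard ≠ 1}.ncard = 2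

lemma ncard_neighborSet_ne_one {v a b : V} (ha : G.Adj v a) (hb : G.Adj v b) (hab : a ≠ b) :
    (G.neighborSet v).ncard ≠ 1 := by
  rw [Ne, Set.ncard_eq_one]
  rintro ⟨c, hc⟩
  have ha' : a ∈ G.neighborSet v := ha
  have hb' : b ∈ G.neighborSet v := hb
  rw [hc, Set.mem_singleton_iff] at ha' hb'
  exact hab (ha'.trans hb'.symm)

lemma ncard_setOf_ncard_neighborSet_ne_one_eq_two {u v : V} (huv : u ≠ v)
    (hleaf : ∀ w, w ≠ u → w ≠ v → (G.neighborSet w).ncard = 1)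
    (hu : (G.neighborSet u).ncard ≠ 1) (hv : (G.neighborSet v).ncard ≠ 1) :
    {w | (G.neighborSet w).ncard ≠ 1}.ncard = 2 := by
  have hcenters : {w | (G.neighborSet w).ncard ≠ 1} = {u, v} := by
    ext w
    simp only [Set.mem_ofPred_eq, Set.mem_insert_iff, Set.mem_singleton_iff]
    refine ⟨fun hw => ?_, by rintro (rfl | rfl) <;> assumption⟩
    by_contra! hne
    exact hw (hleaf w hne.1 hne.2)
  rw [hcenters, Set.ncard_pair huv]

lemma IsDominatingEdge.exists_isDoubleStar_le [Finite V] {u v : V} (h : G.IsDominatingEdge u v)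
    (hu : ¬ G.IsUniversal u) (hv : ¬ G.IsUniversal v) :
    ∃ T ≤ G, T.IsDoubleStar := by
  classical
  set p : V → V := fun w => if G.Adj u w then u else v
  have hpuv : ∀ w, p w = u ∨ p w = v := fun w => by by_cases G.Adj u w <;> simp [p, *]
  have hadj_p : ∀ w, w ≠ u → G.Adj w (p w) := by
    intro w hwu
    by_cases huw : G.Adj u w
    · simpa [p, huw] using huw.symm
    · have hwv : w ≠ v := by rintro rfl; exact huw h.1
      simpa [p, huw] using ((h.2 w hwu hwv).resolve_left huw).symm
  set T := parentGraph u p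
  have hT : T.IsTree := by
    refine isTree_parentGraph (fun w => if w = u then 0 else if w = v then 1 else 2) ?_
    intro w hwu
    by_cases hwv : w = v
    · simp [p, hwv, h.1, h.1.ne.symm]
    · by_cases huw : G.Adj u w <;> simp [p, huw, hwu, hwv, h.1.ne.symm]
  have hleaf : ∀ w, w ≠ u → w ≠ v → (T.neighborSet w).ncard = 1 := fun w hwu hwv => by
    have hne : ∀ b, p b ≠ w := fun b => (hpuv b).elim (· ▸ hwu.symm) (· ▸ hwv.symm)
    rw [neighborSet_parentGraph hwu (hne w) hne, Set.ncard_singleton]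
  obtain ⟨y, huy, hny⟩ : ∃ y, u ≠ y ∧ ¬ G.Adj u y := by simpa [IsUniversal] using hu
  obtain ⟨z, hvz, hnz⟩ : ∃ z, v ≠ z ∧ ¬ G.Adj v z := by simpa [IsUniversal] using hv
  have hzu : z ≠ u := by rintro rfl; exact hnz h.1.symm
  have hyv : y ≠ v := by rintro rfl; exact hny h.1
  have huz : G.Adj u z := (h.2 z hzu hvz.symm).resolve_right hnz
  have hTuv : T.Adj u v := parentGraph_adj.2 ⟨h.1.ne, Or.inr ⟨h.1.ne.symm, by simp [p, h.1]⟩⟩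
  have hTuz : T.Adj u z := parentGraph_adj.2 ⟨huz.ne, Or.inr ⟨hzu, by simp [p, huz]⟩⟩
  have hTvy : T.Adj v y := parentGraph_adj.2 ⟨hyv.symm, Or.inr ⟨huy.symm, by simp [p, hny]⟩⟩
  exact ⟨T, parentGraph_le hadj_p, hT, ncard_setOf_ncard_neighborSet_ne_one_eq_two h.1.ne hleaf
    (ncard_neighborSet_ne_one hTuv hTuz hvz) (ncard_neighborSet_ne_one hTuv.symm hTvy huy)⟩

lemma IsDominatingEdge.mono {H : SimpleGraph V} {u v : V} (h : G.IsDominatingEdge u v)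
    (hGH : G ≤ H) : H.IsDominatingEdge u v :=
  ⟨hGH h.1, fun w hwu hwv => (h.2 w hwu hwv).imp (@hGH _ _) (@hGH _ _)⟩

lemma Preconnected.mem_of_forall_adj_mem (hG : G.Preconnected) {s : Set V} {a : V} (ha : a ∈ s)
    (hs : ∀ x ∈ s, ∀ y, G.Adj x y → y ∈ s) (b : V) : b ∈ s := by
  by_contra hb
  obtain ⟨q⟩ := hG a b
  obtain ⟨d, -, hd₁, hd₂⟩ := q.exists_boundary_dart s ha hb
  exact hd₂ (hs _ hd₁ _ d.adj)

lemma Preconnected.eq_or_eq_of_neighborSet_eq_singleton (hG : G.Preconnected) {v a : V}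
    (hv : G.neighborSet v = {a}) (ha : G.neighborSet a = {v}) (z : V) : z = v ∨ z = a := by
  refine hG.mem_of_forall_adj_mem (s := {v, a}) (Set.mem_insert v _) ?_ z
  rintro x (rfl | rfl) y hxy
  · have hy : y ∈ G.neighborSet x := hxy
    exact Or.inr (by simpa [hv] using hy)
  · have hy : y ∈ G.neighborSet x := hxy
    exact Or.inl (by simpa [ha] using hy)

lemma IsDoubleStar.exists_isDominatingEdge {T : SimpleGraph V} (hT : T.IsDoubleStar) :
    ∃ u v, T.IsDominatingEdge u v := by
  obtain ⟨u, v, huv, hcenters⟩ := Set.ncard_eq_two.1 hT.2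
  have hleaf : ∀ w, w ≠ u → w ≠ v → ∃ a, T.neighborSet w = {a} := by
    intro w hwu hwv
    refine Set.ncard_eq_one.1 (not_not.1 fun hw => ?_)
    have : w ∈ ({u, v} : Set V) := hcenters ▸ hw
    simp_all
  have hconn := hT.1.connected.preconnected
  refine ⟨u, v, ?_, fun w hwu hwv => ?_⟩
  · -- otherwise `u` and its neighbours, all leaves, would form a component
    by_contra hnuv
    have := hconn.mem_of_forall_adj_mem (Set.mem_insert u (T.neighborSet u)) ?_ v
    · exact (Set.mem_insert_iff.1 this).elim huv.symm hnuv
    rintro x (rfl | hux) y hxy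
    · exact Or.inr hxy
    obtain ⟨c, hc⟩ := hleaf x hux.ne.symm (by rintro rfl; exact hnuv hux)
    have hu : u ∈ T.neighborSet x := hux.symm
    have hy : y ∈ T.neighborSet x := hxy
    rw [hc, Set.mem_singleton_iff] at hu hy
    exact Or.inl (hy.trans hu.symm)
  · obtain ⟨a, ha⟩ := hleaf w hwu hwv
    have hwa : T.Adj w a := by simp [← mem_neighborSet, ha]
    by_cases hau : a = u
    · exact Or.inl (hau ▸ hwa.symm)
    by_cases hav : a = v
    · exact Or.inr (hav ▸ hwa.symm)
    obtain ⟨b, hb⟩ := hleaf a hau hav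
    have hwb : w ∈ T.neighborSet a := hwa.symm
    rw [hb, Set.mem_singleton_iff] at hwb
    rcases hconn.eq_or_eq_of_neighborSet_eq_singleton ha (hwb ▸ hb) u with h | h
    exacts [absurd h.symm hwu, absurd h.symm hau]

end SimpleGraph

/-- vv(G) = n(G) − 2 iff G has no universal vertex and G contains a spanning
double star (a spanning tree with exactly two non-leaf vertices). -/
theorem stmt_6 [Fintype V] (G : SimpleGraph V)
    (hconn : G.Connected) (hn : 2 ≤ Fintype.card V) :
    G.vv = Fintype.card V - 2 ↔
      (¬ ∃ x : V, ∀ y : V, y ≠ x → G.Adj x y) ∧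
      (∃ T : SimpleGraph V, T ≤ G ∧ T.IsTree ∧
        {v : V | (T.neighborSet v).ncard ≠ 1}.ncard = 2) := by
  classical
  have : Nontrivial V := Fintype.one_lt_card_iff_nontrivial.1 hn
  have huniv : (∃ x : V, ∀ y : V, y ≠ x → G.Adj x y) ↔ ∃ x, G.IsUniversal x :=
    exists_congr fun x => ⟨fun h _ hxy => h _ hxy.symm, fun h _ hyx => h hyx.symm⟩
  rw [huniv, not_exists]
  constructor
  · intro hvv
    have hnu : ∀ x, ¬ G.IsUniversal x := fun x hx => by
      have := hx.card_sub_one_le_vv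
      omega
    obtain ⟨u, v, huv⟩ := exists_isDominatingEdge_of_card_sub_two_le_vv hconn hvv.ge
    exact ⟨hnu, huv.exists_isDoubleStar_le (hnu u) (hnu v)⟩
  · rintro ⟨hnu, T, hTG, hT⟩
    obtain ⟨u, v, huv⟩ := IsDoubleStar.exists_isDominatingEdge hT
    have hge := (huv.mono hTG).card_sub_two_le_vv
    have hlt : ¬ Fintype.card V - 1 ≤ G.vv := fun h =>
      (exists_isUniversal_of_card_sub_one_le_vv h).elim hnu
    omega
end

section
/- If G is a finite connected simple graph with n(G) ≥ 2 and x ∈ V(G), then (n(G) − 1)/ecc_G(x) ≤ v_x(G) ≤ n(G) − ecc_G(x). -/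
open SimpleGraph

variable {V : Type*}

/-- The eccentricity of x: the maximum distance from x to any vertex. -/
noncomputable def SimpleGraph.ecc (G : SimpleGraph V) [Fintype V] (x : V) : ℕ :=
  Finset.univ.sup fun y => G.dist x y

/-!
Split `V \ {x}` into the distance spheres of radii `1, …, ecc x` around `x`. Each sphere is an
`x`-visibility set, since a vertex of a shortest `x,y`-path other than `y` is strictly closer to `x`
than `y`; so the `ecc x` spheres each have at most `v_x` vertices, which gives the lower bound.

For the upper bound let `S` be an `x`-visibility set and `D` the largest distance from `x` to `S`.
Every distance `d ≤ ecc x` other than `D` is realized outside `S`: for `d < D` by the vertex at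
distance `d` on a shortest path from `x` to a farther vertex of `S` that meets `S` only at its end,
for `d > D` by any vertex at distance `d`. Hence at least `ecc x` vertices lie outside `S`.
-/

open Finset

namespace SimpleGraph

variable {G : SimpleGraph V}

lemma Walk.dist_getVert_of_length_eq_dist {x y : V} {p : G.Walk x y}
    (hp : p.length = G.dist x y) {i : ℕ} (hi : i ≤ p.length) :
    G.dist x (p.getVert i) = i := by
  rw [← length_eq_dist_of_subwalk hp (p.isSubwalk_take i), Walk.take_length]
  omega

lemma exists_dist_eq_of_le_dist {x z : V} {d : ℕ} (hd : d ≤ G.dist x z) :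
    ∃ v, G.dist x v = d := by
  rcases eq_or_ne (G.dist x z) 0 with h0 | h0
  · exact ⟨x, by rw [dist_self]; omega⟩
  obtain ⟨p, hp⟩ := exists_walk_of_dist_ne_zero h0
  exact ⟨p.getVert d, p.dist_getVert_of_length_eq_dist hp (hp ▸ hd)⟩

lemma isXVisSet_empty (x : V) : G.IsXVisSet x ∅ :=
  ⟨notMem_empty x, fun _ hy => absurd hy (notMem_empty _)⟩

lemma vx_le {x : V} {m : ℕ} (h : ∀ S, G.IsXVisSet x S → S.card ≤ m) : G.vx x ≤ m :=
  csSup_le ⟨0, ∅, isXVisSet_empty x, card_empty⟩ (by rintro _ ⟨S, hS, rfl⟩; exact h S hS)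

section Fintype

variable [Fintype V]

lemma IsXVisSet.card_le_vx {x : V} {S : Finset V} (hS : G.IsXVisSet x S) : S.card ≤ G.vx x :=
  le_csSup ⟨Fintype.card V, by rintro _ ⟨T, -, rfl⟩; exact card_le_univ T⟩ ⟨S, hS, rfl⟩

lemma dist_le_ecc (x y : V) : G.dist x y ≤ G.ecc x :=
  le_sup (mem_univ y)

lemma exists_dist_eq_of_le_ecc {x : V} {d : ℕ} (hd : d ≤ G.ecc x) : ∃ v, G.dist x v = d := by
  obtain ⟨z, -, hz⟩ := exists_mem_eq_sup univ ⟨x, mem_univ x⟩ (G.dist x)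
  exact exists_dist_eq_of_le_dist (z := z) (hz ▸ hd)

noncomputable def sphere (G : SimpleGraph V) (x : V) (i : ℕ) : Finset V :=
  {y | G.dist x y = i}

lemma mem_sphere {x y : V} {i : ℕ} : y ∈ G.sphere x i ↔ G.dist x y = i := by
  simp [sphere]

lemma isXVisSet_sphere (x : V) {i : ℕ} (hi : i ≠ 0) : G.IsXVisSet x (G.sphere x i) := by
  refine ⟨by simpa [mem_sphere] using hi.symm, fun y hy => ?_⟩
  rw [mem_sphere] at hy
  obtain ⟨p, hpath, hp⟩ := (Reachable.of_dist_ne_zero (hy ▸ hi)).exists_path_of_dist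
  refine ⟨p, ⟨hpath, hp⟩, fun z hz hzS => ?_⟩
  obtain ⟨m, rfl, hm⟩ := Walk.mem_support_iff_exists_getVert.mp hz
  rw [mem_sphere, p.dist_getVert_of_length_eq_dist hp hm, ← hy, ← hp] at hzS
  rw [hzS, Walk.getVert_length]

lemma IsXVisSet.ecc_le_card_compl [DecidableEq V] {x : V} {S : Finset V}
    (hS : G.IsXVisSet x S) : G.ecc x ≤ Sᶜ.card := by
  set D := S.sup (G.dist x)
  have hcover : (range (G.ecc x + 1)).erase D ⊆ Sᶜ.image (G.dist x) := by
    intro d hd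
    rw [mem_erase, mem_range] at hd
    rw [mem_image]
    rcases lt_or_gt_of_ne hd.1 with hlt | hgt
    · obtain ⟨y, hyS, hdy⟩ := Finset.lt_sup_iff.mp hlt
      obtain ⟨p, ⟨-, hp⟩, hvis⟩ := hS.2 y hyS
      have hdist : G.dist x (p.getVert d) = d := p.dist_getVert_of_length_eq_dist hp (by omega)
      refine ⟨p.getVert d, mem_compl.mpr fun hmem => ?_, hdist⟩
      rw [hvis _ (p.getVert_mem_support d) hmem] at hdist
      omega
    · obtain ⟨v, hv⟩ := exists_dist_eq_of_le_ecc (G := G) (by omega : d ≤ G.ecc x)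
      refine ⟨v, mem_compl.mpr fun hmem => ?_, hv⟩
      have : G.dist x v ≤ D := le_sup hmem
      omega
  calc G.ecc x = (range (G.ecc x + 1)).card - 1 := by simp
    _ ≤ ((range (G.ecc x + 1)).erase D).card := pred_card_le_card_erase
    _ ≤ (Sᶜ.image (G.dist x)).card := card_le_card hcover
    _ ≤ Sᶜ.card := card_image_le

lemma IsXVisSet.card_le_card_sub_ecc {x : V} {S : Finset V} (hS : G.IsXVisSet x S) :
    S.card ≤ Fintype.card V - G.ecc x := by
  classical
  have := hS.ecc_le_card_compl
  rw [card_compl] at this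
  have := card_le_univ S
  omega

lemma card_sub_one_le_ecc_mul_vx (hconn : G.Connected) (x : V) :
    Fintype.card V - 1 ≤ G.ecc x * G.vx x := by
  classical
  have hmaps : ∀ y ∈ univ.erase x, G.dist x y ∈ Icc 1 (G.ecc x) := fun y hy =>
    mem_Icc.mpr ⟨hconn.pos_dist_of_ne (ne_of_mem_erase hy).symm, dist_le_ecc x y⟩
  have hfibre : ∀ i ∈ Icc 1 (G.ecc x), {y ∈ univ.erase x | G.dist x y = i}.card ≤ G.vx x :=
    fun i hi => (card_le_card (filter_subset_filter _ (erase_subset x univ))).trans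
      (isXVisSet_sphere x (by rw [mem_Icc] at hi; omega)).card_le_vx
  simpa [card_erase_of_mem, mul_comm] using card_le_mul_card_image_of_maps_to hmaps _ hfibre

end Fintype

end SimpleGraph

/-- (n(G) − 1)/ecc_G(x) ≤ v_x(G) ≤ n(G) − ecc_G(x). -/
theorem stmt_12 [Fintype V] (G : SimpleGraph V)
    (hconn : G.Connected) (hn : 2 ≤ Fintype.card V) (x : V) :
    ((Fintype.card V : ℝ) - 1) / (G.ecc x : ℝ) ≤ (G.vx x : ℝ) ∧
    G.vx x ≤ Fintype.card V - G.ecc x := by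
  refine ⟨?_, vx_le fun S hS => hS.card_le_card_sub_ecc⟩
  have hecc : 0 < G.ecc x := by
    obtain ⟨y, hy⟩ := Fintype.exists_ne_of_one_lt_card hn x
    exact (hconn.pos_dist_of_ne hy.symm).trans_le (dist_le_ecc x y)
  have hkey : ((Fintype.card V - 1 : ℕ) : ℝ) ≤ ((G.ecc x * G.vx x : ℕ) : ℝ) :=
    Nat.cast_le.mpr (card_sub_one_le_ecc_mul_vx hconn x)
  rw [Nat.cast_sub (by omega), Nat.cast_mul, Nat.cast_one] at hkey
  rw [div_le_iff₀ (by exact_mod_cast hecc)]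
  linarith
end
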